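/- Let G be a profinite group and suppose the probability that two uniformly random elements of G topologically generate a pro-p subgroup is positive. Assuming G contains an open normal pronilpotent subgroup N with O_p(G) = 1, show that N (and hence G) is finite, so G is virtually pro-p. -/

import Mathlib

open MeasureTheory
open scoped ENNReal

section

variable (p : ℕ) {G : Type*} [Group G] [TopologicalSpace G] [IsTopologicalGroup G]
  [CompactSpace G] [T2Space G] [TotallyDisconnectedSpace G]

/-- A closed subgroup `K` of the profinite group `G` is pro-`p` if its image in every
quotient of `G` by an open normal subgroup is a `p`-group. -/
def IsProPSubgroup (K : Subgroup G) : Prop :=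
  IsClosed (K : Set G) ∧
    ∀ (N : Subgroup G) [N.Normal], IsOpen (N : Set G) →
      IsPGroup p (K.map (QuotientGroup.mk' N))

/-- `O_p(G)`: the largest closed normal pro-`p` subgroup of `G`. -/
def proPCore : Subgroup G :=
  sSup {K : Subgroup G | K.Normal ∧ IsProPSubgroup p K}

set_option linter.unusedSectionVars false
set_option maxHeartbeats 1000000

section Aux

lemma isOpen_of_mul_stable (U : Subgroup G) (hU : IsOpen (U : Set G)) (A : Set G)
    (h : ∀ a ∈ A, ∀ u ∈ U, a * u ∈ A) : IsOpen A := by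
  rw [isOpen_iff_forall_mem_open]
  intro a ha
  refine ⟨(a * ·) '' (U : Set G), ?_, ?_, ⟨1, U.one_mem, mul_one a⟩⟩
  · rintro x ⟨u, hu, rfl⟩; exact h a ha u hu
  · exact (Homeomorph.mulLeft a).isOpenMap _ hU

def pPart (N U : Subgroup G) : Set G :=
  {g : G | (∃ n ∈ N, n⁻¹ * g ∈ U) ∧ ∃ k : ℕ, g ^ p ^ k ∈ U}

lemma pPart_mono (N : Subgroup G) {U V : Subgroup G} (h : U ≤ V) :
    pPart p N U ⊆ pPart p N V := by
  rintro g ⟨⟨n, hn, hng⟩, k, hk⟩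
  exact ⟨⟨n, hn, h hng⟩, k, h hk⟩

lemma mem_pPart_iff {N U : Subgroup G} [U.Normal] {g : G} :
    g ∈ pPart p N U ↔ (QuotientGroup.mk' U) g ∈ N.map (QuotientGroup.mk' U) ∧
      ∃ k : ℕ, ((QuotientGroup.mk' U) g) ^ p ^ k = 1 := by
  constructor
  · rintro ⟨⟨n, hn, hng⟩, k, hk⟩
    refine ⟨⟨n, hn, (QuotientGroup.eq).mpr hng⟩, k, ?_⟩
    rw [← map_pow]
    exact (QuotientGroup.eq_one_iff _).mpr hk
  · rintro ⟨⟨n, hn, hng⟩, k, hk⟩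
    refine ⟨⟨n, hn, (QuotientGroup.eq).mp hng⟩, k, ?_⟩
    rw [← map_pow] at hk
    exact (QuotientGroup.eq_one_iff _).mp hk

lemma isClosed_pPart (N U : Subgroup G) [U.Normal] (hU : IsOpen (U : Set G)) :
    IsClosed (pPart p N U) := by
  rw [← isOpen_compl_iff]
  refine isOpen_of_mul_stable U hU _ ?_
  intro a ha u hu hau
  apply ha
  rw [mem_pPart_iff] at hau ⊢
  have : (QuotientGroup.mk' U) (a * u) = (QuotientGroup.mk' U) a := by
    refine (QuotientGroup.eq).mpr ?_
    simpa using U.inv_mem hu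
  rwa [this] at hau

lemma pelem_mul {H : Type*} [Group H] [Finite H] (hp : p.Prime)
    (hnil : Group.IsNilpotent H)
    {a b : H} (ha : ∃ k : ℕ, a ^ p ^ k = 1) (hb : ∃ k : ℕ, b ^ p ^ k = 1) :
    ∃ k : ℕ, (a * b) ^ p ^ k = 1 := by
  haveI : Fact p.Prime := ⟨hp⟩
  have htfae : Group.IsNilpotent H ↔
      ∀ (q : ℕ) (_ : Fact q.Prime) (P : Sylow q H), (P : Subgroup H).Normal :=
    (isNilpotent_of_finite_tfae (G := H)).out 0 3
  have hnorm : ∀ (P : Sylow p H), (P : Subgroup H).Normal :=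
    fun P => htfae.mp hnil p ⟨hp⟩ P
  obtain ⟨P⟩ := (inferInstance : Nonempty (Sylow p H))
  haveI := Sylow.unique_of_normal P (hnorm P)
  have key : ∀ c : H, (∃ k : ℕ, c ^ p ^ k = 1) → c ∈ (P : Subgroup H) := by
    intro c ⟨k, hk⟩
    have hord : IsPGroup p (Subgroup.zpowers c) := by
      obtain ⟨l, -, hl⟩ := (Nat.dvd_prime_pow hp).mp (orderOf_dvd_of_pow_eq_one hk)
      exact IsPGroup.of_card (by rw [Nat.card_zpowers, hl])
    obtain ⟨Q, hQ⟩ := hord.exists_le_sylow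
    have : Q = P := Subsingleton.elim _ _
    exact this ▸ hQ (Subgroup.mem_zpowers c)
  have hab : a * b ∈ (P : Subgroup H) := mul_mem (key a ha) (key b hb)
  obtain ⟨k, hk⟩ := P.isPGroup' ⟨a * b, hab⟩
  exact ⟨k, by simpa [Subtype.ext_iff] using hk⟩

lemma exists_pPart_subset (hp : p.Prime) (N : Subgroup G) [N.Normal]
    (hNnilp : ∀ (K : Subgroup G) [K.Normal], IsOpen (K : Set G) →
      Group.IsNilpotent (N.map (QuotientGroup.mk' K)))
    (hOp : proPCore p = (⊥ : Subgroup G))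
    (U₀ : Subgroup G) [U₀.Normal] (hU₀ : IsOpen (U₀ : Set G)) :
    ∃ U : OpenNormalSubgroup G, ((U : Subgroup G) : Set G) ⊆ (U₀ : Set G) ∧
      pPart p N (U : Subgroup G) ⊆ (U₀ : Set G) := by
  have hopen : ∀ U : OpenNormalSubgroup G, IsOpen ((U : Subgroup G) : Set G) :=
    fun U => U.toOpenSubgroup.isOpen
  -- the subgroup M
  set Mc : Set G := ⋂ (U : OpenNormalSubgroup G), pPart p N (U : Subgroup G) with hMc
  have hmemM : ∀ {g : G}, g ∈ Mc ↔ ∀ U : OpenNormalSubgroup G, g ∈ pPart p N (U : Subgroup G) :=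
    fun {g} => Set.mem_iInter
  let M : Subgroup G :=
    { carrier := Mc
      one_mem' := hmemM.mpr fun U => ⟨⟨1, N.one_mem, by simpa using (U : Subgroup G).one_mem⟩,
        0, by simpa using (U : Subgroup G).one_mem⟩
      mul_mem' := by
        intro a b ha hb
        rw [hmemM] at ha hb ⊢
        intro U
        haveI : Finite (G ⧸ (U : Subgroup G)) :=
          Subgroup.quotient_finite_of_isOpen _ (hopen U)
        have hnil := hNnilp (U : Subgroup G) (hopen U)
        rw [mem_pPart_iff]
        obtain ⟨haN, ka, hka⟩ := (mem_pPart_iff p).mp (ha U)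
        obtain ⟨hbN, kb, hkb⟩ := (mem_pPart_iff p).mp (hb U)
        refine ⟨?_, ?_⟩
        · rw [map_mul]; exact mul_mem haN hbN
        · have := pelem_mul p hp hnil (a := ⟨_, haN⟩) (b := ⟨_, hbN⟩)
            ⟨ka, Subtype.ext (by simpa using hka)⟩ ⟨kb, Subtype.ext (by simpa using hkb)⟩
          obtain ⟨k, hk⟩ := this
          exact ⟨k, by rw [map_mul]; simpa [Subtype.ext_iff] using hk⟩
      inv_mem' := by
        intro a ha
        rw [hmemM] at ha ⊢
        intro U
        rw [mem_pPart_iff]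
        obtain ⟨haN, k, hk⟩ := (mem_pPart_iff p).mp (ha U)
        refine ⟨by rw [map_inv]; exact inv_mem haN, k, ?_⟩
        rw [map_inv, inv_pow, hk, inv_one] }
  have hMnormal : M.Normal := by
    constructor
    intro m hm g
    have hm' : m ∈ Mc := hm
    rw [hmemM] at hm'
    show g * m * g⁻¹ ∈ Mc
    rw [hmemM]
    intro U
    haveI hNbar : (N.map (QuotientGroup.mk' (U : Subgroup G))).Normal :=
      Subgroup.Normal.map ‹N.Normal› _ (QuotientGroup.mk'_surjective _)
    rw [mem_pPart_iff]
    obtain ⟨hmN, k, hk⟩ := (mem_pPart_iff p).mp (hm' U)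
    refine ⟨?_, k, ?_⟩
    · rw [map_mul, map_mul, map_inv]
      exact hNbar.conj_mem _ hmN _
    · rw [map_mul, map_mul, map_inv, conj_pow, hk, mul_one, mul_inv_cancel]
  have hMproP : IsProPSubgroup p M := by
    constructor
    · exact isClosed_iInter fun U => isClosed_pPart p N _ (hopen U)
    · intro V _ hVopen
      intro x
      obtain ⟨y, hy⟩ := x
      obtain ⟨g, hgM, rfl⟩ := hy
      have hg : g ∈ Mc := hgM
      rw [hmemM] at hg
      have := hg ⟨⟨V, hVopen⟩, ‹V.Normal›⟩
      rw [mem_pPart_iff] at this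
      obtain ⟨-, k, hk⟩ := this
      exact ⟨k, Subtype.ext (by simpa using hk)⟩
  have hMbot : M = ⊥ := by
    have hle : M ≤ proPCore p := le_sSup ⟨hMnormal, hMproP⟩
    rw [hOp] at hle
    exact le_bot_iff.mp hle
  -- compactness
  haveI : Nonempty (OpenNormalSubgroup G) :=
    ⟨⟨⟨(⊤ : Subgroup G), by exact isOpen_univ⟩, inferInstance⟩⟩
  have hcompact : IsCompact ((U₀ : Set G)ᶜ) := (hU₀.isClosed_compl).isCompact
  have hclosed : ∀ U : OpenNormalSubgroup G, IsClosed (pPart p N (U : Subgroup G)) :=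
    fun U => isClosed_pPart p N _ (hopen U)
  have hdir : Directed (fun x1 x2 => x1 ⊇ x2)
      (fun U : OpenNormalSubgroup G => pPart p N (U : Subgroup G)) := by
    intro U V
    refine ⟨U ⊓ V, pPart_mono p N ?_, pPart_mono p N ?_⟩
    · exact fun x hx => (inf_le_left : U ⊓ V ≤ U) hx
    · exact fun x hx => (inf_le_right : U ⊓ V ≤ V) hx
  have hinter : (U₀ : Set G)ᶜ ∩ ⋂ (U : OpenNormalSubgroup G), pPart p N (U : Subgroup G) = ∅ := by
    rw [Set.eq_empty_iff_forall_notMem]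
    rintro x ⟨hx1, hx2⟩
    have : x ∈ M := hx2
    rw [hMbot, Subgroup.mem_bot] at this
    exact hx1 (by simpa [this] using U₀.one_mem)
  obtain ⟨W, hW⟩ := hcompact.elim_directed_family_closed _ hclosed hinter hdir
  refine ⟨W ⊓ ⟨⟨U₀, hU₀⟩, ‹U₀.Normal›⟩, ?_, ?_⟩
  · intro x hx
    exact (inf_le_right : W ⊓ _ ≤ _) hx
  · intro x hx
    have hxW : x ∈ pPart p N (W : Subgroup G) :=
      pPart_mono p N (fun y hy => (inf_le_left : W ⊓ _ ≤ W) hy) hx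
    by_contra hxU
    exact Set.eq_empty_iff_forall_notMem.mp hW x ⟨hxU, hxW⟩

section
variable [MeasurableSpace G] [BorelSpace G]

lemma measure_preimage_mk' (μ : Measure G) [μ.IsMulLeftInvariant]
    (U : Subgroup G) [U.Normal] (hU : IsOpen (U : Set G)) (A : Set (G ⧸ U)) :
    μ ((QuotientGroup.mk' U) ⁻¹' A) = (Nat.card A : ℝ≥0∞) * μ (U : Set G) := by
  haveI : Finite (G ⧸ U) := Subgroup.quotient_finite_of_isOpen _ hU
  haveI := Fintype.ofFinite (G ⧸ U)
  classical
  have hfib : ∀ a : G ⧸ U, MeasurableSet ((QuotientGroup.mk' U) ⁻¹' {a}) ∧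
      μ ((QuotientGroup.mk' U) ⁻¹' {a}) = μ (U : Set G) := by
    intro a
    obtain ⟨g, rfl⟩ := QuotientGroup.mk'_surjective U a
    have heq : (QuotientGroup.mk' U) ⁻¹' {(QuotientGroup.mk' U) g}
        = (fun x => g⁻¹ * x) ⁻¹' (U : Set G) := by
      ext x
      simp only [Set.mem_preimage, Set.mem_singleton_iff, SetLike.mem_coe]
      rw [QuotientGroup.mk'_apply, QuotientGroup.mk'_apply, eq_comm, QuotientGroup.eq]
    rw [heq]
    exact ⟨(measurable_const_mul g⁻¹) hU.measurableSet,
      measure_preimage_mul μ g⁻¹ (U : Set G)⟩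
  have hA : (QuotientGroup.mk' U) ⁻¹' A = ⋃ a ∈ A.toFinset, (QuotientGroup.mk' U) ⁻¹' {a} := by
    ext x; simp
  rw [hA, measure_biUnion_finset ?_ (fun b _ => (hfib b).1)]
  · rw [Finset.sum_congr rfl (fun b _ => (hfib b).2), Finset.sum_const, nsmul_eq_mul]
    congr 1
    rw [Nat.card_coe_set_eq, Set.ncard_eq_toFinset_card']
  · intro a _ b _ hab
    refine Set.disjoint_left.mpr fun x hxa hxb => hab ?_
    simp only [Set.mem_preimage, Set.mem_singleton_iff] at hxa hxb
    rw [← hxa, ← hxb]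

lemma main_bound (hp : p.Prime)
    (N : Subgroup G) [N.Normal] (hNopen : IsOpen (N : Set G))
    (hNnilp : ∀ (K : Subgroup G) [K.Normal], IsOpen (K : Set G) →
      Group.IsNilpotent (N.map (QuotientGroup.mk' K)))
    (hOp : proPCore p = (⊥ : Subgroup G)) (U₀ : OpenNormalSubgroup G) :
    ((Measure.haar : Measure G).prod (Measure.haar : Measure G))
      {xy : G × G |
        IsProPSubgroup p ((Subgroup.closure {xy.1, xy.2}).topologicalClosure)}
      ≤ (Measure.haar : Measure G) Set.univ * (Nat.card (G ⧸ N) : ℝ≥0∞) *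
        (Measure.haar : Measure G) ((U₀ : Subgroup G) : Set G) := by
  classical
  set μ : Measure G := Measure.haar with hμ
  haveI : Fact p.Prime := ⟨hp⟩
  obtain ⟨U, hUle, hUpart⟩ := exists_pPart_subset p hp N hNnilp hOp (U₀ : Subgroup G)
    U₀.toOpenSubgroup.isOpen
  set π := QuotientGroup.mk' (U : Subgroup G) with hπ
  haveI : Finite (G ⧸ (U : Subgroup G)) :=
    Subgroup.quotient_finite_of_isOpen _ U.toOpenSubgroup.isOpen
  haveI : Finite (G ⧸ N) := Subgroup.quotient_finite_of_isOpen _ hNopen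
  haveI := Fintype.ofFinite (Sylow p (G ⧸ (U : Subgroup G)))
  -- covering by Sylow boxes
  have hcover : {xy : G × G |
        IsProPSubgroup p ((Subgroup.closure {xy.1, xy.2}).topologicalClosure)} ⊆
      ⋃ (P : Sylow p (G ⧸ (U : Subgroup G))),
        (π ⁻¹' ((P : Subgroup (G ⧸ (U : Subgroup G))) : Set (G ⧸ (U : Subgroup G)))) ×ˢ (π ⁻¹' ((P : Subgroup (G ⧸ (U : Subgroup G))) : Set (G ⧸ (U : Subgroup G)))) := by
    rintro ⟨x, y⟩ hxy
    have h2 := hxy.2 (U : Subgroup G) U.toOpenSubgroup.isOpen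
    have hx : x ∈ (Subgroup.closure {x, y}).topologicalClosure :=
      Subgroup.le_topologicalClosure _ (Subgroup.subset_closure (by simp))
    have hy : y ∈ (Subgroup.closure {x, y}).topologicalClosure :=
      Subgroup.le_topologicalClosure _ (Subgroup.subset_closure (by simp))
    have hcl : Subgroup.closure {π x, π y} ≤
        ((Subgroup.closure {x, y}).topologicalClosure).map π := by
      rw [Subgroup.closure_le]
      rintro z (rfl | rfl)
      · exact ⟨x, hx, rfl⟩
      · exact ⟨y, hy, rfl⟩
    have hPG : IsPGroup p (Subgroup.closure {π x, π y}) := h2.to_le hcl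
    obtain ⟨P, hP⟩ := hPG.exists_le_sylow
    exact Set.mem_iUnion.mpr ⟨P, hP (Subgroup.subset_closure (by simp)),
      hP (Subgroup.subset_closure (by simp))⟩
  refine le_trans (measure_mono hcover) ?_
  refine le_trans (measure_iUnion_le _) ?_
  -- each box
  have hbox : ∀ P : Sylow p (G ⧸ (U : Subgroup G)),
      (μ.prod μ) ((π ⁻¹' ((P : Subgroup (G ⧸ (U : Subgroup G))) : Set (G ⧸ (U : Subgroup G)))) ×ˢ (π ⁻¹' ((P : Subgroup (G ⧸ (U : Subgroup G))) : Set (G ⧸ (U : Subgroup G)))))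
        = ((Nat.card (P : Subgroup (G ⧸ (U : Subgroup G))) : ℝ≥0∞) * μ ((U : Subgroup G) : Set G))
          * ((Nat.card (P : Subgroup (G ⧸ (U : Subgroup G))) : ℝ≥0∞) *
            μ ((U : Subgroup G) : Set G)) := by
    intro P
    rw [Measure.prod_prod, measure_preimage_mk' μ _ U.toOpenSubgroup.isOpen]
    congr 2 <;> · congr 1 <;> rw [Nat.card_coe_set_eq, Set.ncard_coe_Subgroup]
  rw [tsum_fintype]
  obtain ⟨P₀⟩ := (inferInstance : Nonempty (Sylow p (G ⧸ (U : Subgroup G))))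
  set m := Nat.card (P₀ : Subgroup (G ⧸ (U : Subgroup G))) with hm
  have hsame : ∀ P : Sylow p (G ⧸ (U : Subgroup G)),
      Nat.card (P : Subgroup (G ⧸ (U : Subgroup G))) = m := by
    intro P
    rw [hm, Sylow.card_eq_multiplicity, Sylow.card_eq_multiplicity]
  have hsum : ∑ P : Sylow p (G ⧸ (U : Subgroup G)),
      (μ.prod μ) ((π ⁻¹' ((P : Subgroup (G ⧸ (U : Subgroup G))) : Set (G ⧸ (U : Subgroup G)))) ×ˢ
        (π ⁻¹' ((P : Subgroup (G ⧸ (U : Subgroup G))) : Set (G ⧸ (U : Subgroup G)))))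
      = (Fintype.card (Sylow p (G ⧸ (U : Subgroup G))) : ℝ≥0∞) *
        (((m : ℝ≥0∞) * μ ((U : Subgroup G) : Set G)) *
          ((m : ℝ≥0∞) * μ ((U : Subgroup G) : Set G))) := by
    rw [Finset.sum_congr rfl (fun P _ => by rw [hbox P, hsame P]), Finset.sum_const,
      nsmul_eq_mul, Finset.card_univ]
  rw [hsum]
  -- counting bounds
  have hidx : Fintype.card (Sylow p (G ⧸ (U : Subgroup G))) * m ≤
      Nat.card (G ⧸ (U : Subgroup G)) := by
    rw [← Nat.card_eq_fintype_card, Sylow.card_eq_index_normalizer P₀]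
    calc (Subgroup.normalizer ((P₀ : Subgroup (G ⧸ (U : Subgroup G))) : Set (G ⧸ (U : Subgroup G)))).index * m
        ≤ (P₀ : Subgroup (G ⧸ (U : Subgroup G))).index * m :=
          Nat.mul_le_mul_right _ (Nat.le_of_dvd
            (Nat.pos_of_ne_zero Subgroup.index_ne_zero_of_finite)
            (Subgroup.index_dvd_of_le Subgroup.le_normalizer))
      _ = Nat.card (G ⧸ (U : Subgroup G)) := by
          rw [mul_comm]; exact Subgroup.card_mul_index _
  have hQfull : (Nat.card (G ⧸ (U : Subgroup G)) : ℝ≥0∞) * μ ((U : Subgroup G) : Set G)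
      = μ Set.univ := by
    have := measure_preimage_mk' μ (U : Subgroup G) U.toOpenSubgroup.isOpen Set.univ
    rw [Set.preimage_univ, Nat.card_univ] at this
    exact this.symm
  -- the key bound  m * μ U ≤ card (G ⧸ N) * μ U₀
  have hkey : (m : ℝ≥0∞) * μ ((U : Subgroup G) : Set G) ≤
      (Nat.card (G ⧸ N) : ℝ≥0∞) * μ ((U₀ : Subgroup G) : Set G) := by
    set Nbar := N.map π with hNbar
    haveI : Nbar.Normal := Subgroup.Normal.map ‹N.Normal› _ (QuotientGroup.mk'_surjective _)
    set f := (QuotientGroup.mk' Nbar).comp (P₀ : Subgroup (G ⧸ (U : Subgroup G))).subtype with hf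
    have e1 : m = Nat.card ((P₀ : Subgroup (G ⧸ (U : Subgroup G))) ⧸ f.ker) * Nat.card f.ker :=
      Subgroup.card_eq_card_quotient_mul_card_subgroup f.ker
    have e2 : Nat.card ((P₀ : Subgroup (G ⧸ (U : Subgroup G))) ⧸ f.ker) = Nat.card f.range :=
      Nat.card_congr (QuotientGroup.quotientKerEquivRange f).toEquiv
    have e3 : Nat.card f.range ≤ Nat.card ((G ⧸ (U : Subgroup G)) ⧸ Nbar) :=
      Subgroup.card_le_card_group _
    have e4 : Nat.card ((G ⧸ (U : Subgroup G)) ⧸ Nbar) ≤ Nat.card (G ⧸ N) := by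
      have hcomap : N ≤ Nbar.comap π := fun n hn => Subgroup.mem_comap.mpr ⟨n, hn, rfl⟩
      refine Nat.card_le_card_of_surjective (QuotientGroup.map N Nbar π hcomap) ?_
      intro q
      obtain ⟨z, rfl⟩ := QuotientGroup.mk_surjective q
      obtain ⟨g, rfl⟩ := QuotientGroup.mk'_surjective (U : Subgroup G) z
      exact ⟨(g : G ⧸ N), QuotientGroup.map_mk N Nbar π hcomap g⟩
    have e5 : Nat.card f.ker ≤ Nat.card (π '' ((U₀ : Subgroup G) : Set G)) := by
      have hj : ∀ k : f.ker, ((k : (P₀ : Subgroup (G ⧸ (U : Subgroup G)))) : G ⧸ (U : Subgroup G))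
          ∈ π '' ((U₀ : Subgroup G) : Set G) := by
        intro k
        set x := ((k : (P₀ : Subgroup (G ⧸ (U : Subgroup G)))) : G ⧸ (U : Subgroup G)) with hx
        have hxN : x ∈ Nbar := by
          have hk := k.2
          rw [MonoidHom.mem_ker] at hk
          have : (QuotientGroup.mk' Nbar) x = 1 := hk
          exact (QuotientGroup.eq_one_iff x).mp this
        obtain ⟨n, hn⟩ := P₀.isPGroup' (k : (P₀ : Subgroup (G ⧸ (U : Subgroup G))))
        have hxpow : x ^ p ^ n = 1 := by
          have := congrArg (Subtype.val) hn
          simpa using this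
        obtain ⟨g, hg⟩ := QuotientGroup.mk'_surjective (U : Subgroup G) x
        have hgmem : g ∈ pPart p N (U : Subgroup G) := by
          refine (mem_pPart_iff p).mpr ⟨?_, n, ?_⟩
          · rw [hg]; exact hxN
          · rw [hg]; exact hxpow
        exact ⟨g, hUpart hgmem, hg⟩
      refine Nat.card_le_card_of_injective (fun k => ⟨_, hj k⟩) ?_
      intro k k' h
      have hval : ((k : (P₀ : Subgroup (G ⧸ (U : Subgroup G)))) : G ⧸ (U : Subgroup G))
          = ((k' : (P₀ : Subgroup (G ⧸ (U : Subgroup G)))) : G ⧸ (U : Subgroup G)) := by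
        simpa using congrArg Subtype.val h
      apply Subtype.ext
      apply Subtype.ext
      exact hval
    have e6 : (Nat.card (π '' ((U₀ : Subgroup G) : Set G)) : ℝ≥0∞) *
        μ ((U : Subgroup G) : Set G) = μ ((U₀ : Subgroup G) : Set G) := by
      have hpre : π ⁻¹' (π '' ((U₀ : Subgroup G) : Set G)) = ((U₀ : Subgroup G) : Set G) := by
        refine subset_antisymm ?_ (Set.subset_preimage_image _ _)
        rintro x ⟨u, hu, hux⟩
        have : u⁻¹ * x ∈ (U : Subgroup G) := by
          rw [QuotientGroup.mk'_apply, QuotientGroup.mk'_apply] at hux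
          exact QuotientGroup.eq.mp hux
        have hUU₀ : u⁻¹ * x ∈ (U₀ : Subgroup G) := hUle this
        have : u * (u⁻¹ * x) ∈ (U₀ : Subgroup G) := mul_mem hu hUU₀
        simpa using this
      rw [← measure_preimage_mk' μ (U : Subgroup G) U.toOpenSubgroup.isOpen
        (π '' ((U₀ : Subgroup G) : Set G)), hpre]
    have hnat : m ≤ Nat.card (G ⧸ N) * Nat.card (π '' ((U₀ : Subgroup G) : Set G)) := by
      rw [e1]
      exact Nat.mul_le_mul (e2 ▸ le_trans e3 e4) e5
    calc (m : ℝ≥0∞) * μ ((U : Subgroup G) : Set G)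
        ≤ ((Nat.card (G ⧸ N) * Nat.card (π '' ((U₀ : Subgroup G) : Set G)) : ℕ) : ℝ≥0∞) *
          μ ((U : Subgroup G) : Set G) :=
          mul_le_mul_left (by exact_mod_cast Nat.cast_le.mpr hnat) _
      _ = (Nat.card (G ⧸ N) : ℝ≥0∞) * ((Nat.card (π '' ((U₀ : Subgroup G) : Set G)) : ℝ≥0∞) *
          μ ((U : Subgroup G) : Set G)) := by push_cast; ring
      _ = (Nat.card (G ⧸ N) : ℝ≥0∞) * μ ((U₀ : Subgroup G) : Set G) := by rw [e6]
  calc (Fintype.card (Sylow p (G ⧸ (U : Subgroup G))) : ℝ≥0∞) *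
      (((m : ℝ≥0∞) * μ ((U : Subgroup G) : Set G)) *
        ((m : ℝ≥0∞) * μ ((U : Subgroup G) : Set G)))
      = ((Fintype.card (Sylow p (G ⧸ (U : Subgroup G))) * m : ℕ) : ℝ≥0∞) *
        μ ((U : Subgroup G) : Set G) * ((m : ℝ≥0∞) * μ ((U : Subgroup G) : Set G)) := by
        push_cast; ring
    _ ≤ (Nat.card (G ⧸ (U : Subgroup G)) : ℝ≥0∞) * μ ((U : Subgroup G) : Set G) *
        ((Nat.card (G ⧸ N) : ℝ≥0∞) * μ ((U₀ : Subgroup G) : Set G)) := by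
        exact mul_le_mul' (mul_le_mul_left (Nat.cast_le.mpr hidx) _) hkey
    _ = μ Set.univ * (Nat.card (G ⧸ N) : ℝ≥0∞) * μ ((U₀ : Subgroup G) : Set G) := by
        rw [hQfull]; ring
end
end Aux

/-- Let `G` be a profinite group in which the probability that two
random elements topologically generate a pro-`p` group is positive. If `G` has an
open normal pronilpotent subgroup `N` and `O_p(G) = 1`, then `N` (and hence `G`)
is finite. -/
theorem stmt13 [MeasurableSpace G] [BorelSpace G] (hp : p.Prime)
    (hprob : 0 < ((Measure.haar : Measure G).prod (Measure.haar : Measure G))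
      {xy : G × G |
        IsProPSubgroup p ((Subgroup.closure {xy.1, xy.2}).topologicalClosure)})
    (N : Subgroup G) [N.Normal] (hNopen : IsOpen (N : Set G))
    (hNnilp : ∀ (K : Subgroup G) [K.Normal], IsOpen (K : Set G) →
      Group.IsNilpotent (N.map (QuotientGroup.mk' K)))
    (hOp : proPCore p = (⊥ : Subgroup G)) :
    Finite G := by
  rw [← not_infinite_iff_finite]
  intro hinf
  set μ : Measure G := Measure.haar with hμ
  set Sset : Set (G × G) := {xy : G × G |
    IsProPSubgroup p ((Subgroup.closure {xy.1, xy.2}).topologicalClosure)} with hSset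
  set c : ℝ≥0∞ := μ Set.univ with hc
  set d : ℝ≥0∞ := (Nat.card (G ⧸ N) : ℝ≥0∞) with hd
  -- halving step
  have hstep : ∀ U₀ : OpenNormalSubgroup G, ∃ V : OpenNormalSubgroup G,
      μ ((V : Subgroup G) : Set G) + μ ((V : Subgroup G) : Set G) ≤
        μ ((U₀ : Subgroup G) : Set G) := by
    intro U₀
    haveI : Finite (G ⧸ (U₀ : Subgroup G)) :=
      Subgroup.quotient_finite_of_isOpen _ U₀.toOpenSubgroup.isOpen
    haveI hinfU : Infinite ((U₀ : Subgroup G)) := by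
      by_contra hfin
      rw [not_infinite_iff_finite] at hfin
      exact (not_finite_iff_infinite.mpr hinf)
        (Finite.of_equiv _ (Subgroup.groupEquivQuotientProdSubgroup
          (s := (U₀ : Subgroup G))).symm)
    obtain ⟨u, hu⟩ := exists_ne (1 : ((U₀ : Subgroup G)))
    have hne : (1 : G) ≠ (u : G) := fun h => hu (by
      apply Subtype.ext; exact h.symm)
    obtain ⟨W, hWclopen, h1W, huW⟩ := exists_isClopen_of_totally_separated hne
    obtain ⟨H, hH⟩ :=
      IsTopologicalGroup.exist_openNormalSubgroup_sub_clopen_nhds_of_one hWclopen h1W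
    refine ⟨U₀ ⊓ H, ?_⟩
    set g : G := (u : G) with hg
    have hgU₀ : g ∈ (U₀ : Subgroup G) := u.2
    have hgV : g ∉ ((U₀ ⊓ H : OpenNormalSubgroup G) : Subgroup G) := by
      intro hmem
      have hgH : g ∈ (H : Subgroup G) := (inf_le_right : U₀ ⊓ H ≤ H) hmem
      exact huW (hH hgH)
    set A : Set G := (((U₀ ⊓ H : OpenNormalSubgroup G) : Subgroup G) : Set G) with hA
    have hAopen : IsOpen A := (U₀ ⊓ H).toOpenSubgroup.isOpen
    set B : Set G := (fun x => g⁻¹ * x) ⁻¹' A with hB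
    have hdisj : Disjoint A B := by
      rw [Set.disjoint_left]
      intro x hxA hxB
      have : g = x * (g⁻¹ * x)⁻¹ := by group
      exact hgV (this ▸ mul_mem hxA (inv_mem hxB))
    have hAU : A ⊆ ((U₀ : Subgroup G) : Set G) :=
      fun x hx => (inf_le_left : U₀ ⊓ H ≤ U₀) hx
    have hBU : B ⊆ ((U₀ : Subgroup G) : Set G) := by
      intro x hx
      have hx' : g⁻¹ * x ∈ (U₀ : Subgroup G) := hAU hx
      have := mul_mem hgU₀ hx'
      simpa using this
    have hmeasB : μ B = μ A := measure_preimage_mul μ g⁻¹ A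
    calc μ A + μ A = μ A + μ B := by rw [hmeasB]
      _ = μ (A ∪ B) := (measure_union hdisj
          ((measurable_const_mul g⁻¹) hAopen.measurableSet)).symm
      _ ≤ μ ((U₀ : Subgroup G) : Set G) := measure_mono (Set.union_subset hAU hBU)
  -- geometric decay
  have hsmall : ∀ n : ℕ, ∃ U₀ : OpenNormalSubgroup G,
      μ ((U₀ : Subgroup G) : Set G) ≤ c * (2⁻¹ : ℝ≥0∞) ^ n := by
    intro n
    induction n with
    | zero =>
      refine ⟨⟨⟨(⊤ : Subgroup G), by exact isOpen_univ⟩, inferInstance⟩, ?_⟩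
      simp [hc]
    | succ n ih =>
      obtain ⟨U₀, hU₀⟩ := ih
      obtain ⟨V, hV⟩ := hstep U₀
      refine ⟨V, ?_⟩
      have h2 : 2 * μ ((V : Subgroup G) : Set G) ≤ c * (2⁻¹ : ℝ≥0∞) ^ n :=
        le_trans (by rw [two_mul]; exact hV) hU₀
      calc μ ((V : Subgroup G) : Set G)
          = 2⁻¹ * (2 * μ ((V : Subgroup G) : Set G)) := by
            rw [← mul_assoc, ENNReal.inv_mul_cancel two_ne_zero ENNReal.ofNat_ne_top, one_mul]
        _ ≤ 2⁻¹ * (c * (2⁻¹ : ℝ≥0∞) ^ n) := mul_le_mul_right h2 _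
        _ = c * (2⁻¹ : ℝ≥0∞) ^ (n + 1) := by ring
  -- conclude
  have hbound : ∀ n : ℕ, (μ.prod μ) Sset ≤ (c * d * c) * (2⁻¹ : ℝ≥0∞) ^ n := by
    intro n
    obtain ⟨U₀, hU₀⟩ := hsmall n
    calc (μ.prod μ) Sset ≤ c * d * μ ((U₀ : Subgroup G) : Set G) :=
        main_bound p hp N hNopen hNnilp hOp U₀
      _ ≤ c * d * (c * (2⁻¹ : ℝ≥0∞) ^ n) := mul_le_mul_right hU₀ _
      _ = (c * d * c) * (2⁻¹ : ℝ≥0∞) ^ n := by ring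
  have htend : Filter.Tendsto (fun n : ℕ => (c * d * c) * (2⁻¹ : ℝ≥0∞) ^ n)
      Filter.atTop (nhds 0) := by
    have h1 : Filter.Tendsto (fun n : ℕ => ((2⁻¹ : ℝ≥0∞)) ^ n) Filter.atTop (nhds 0) :=
      ENNReal.tendsto_pow_atTop_nhds_zero_of_lt_one
        (by rw [ENNReal.inv_lt_one]; exact ENNReal.one_lt_two)
    have hcne : c * d * c ≠ ⊤ := by
      refine ENNReal.mul_ne_top (ENNReal.mul_ne_top ?_ ?_) ?_
      · exact measure_ne_top μ _
      · exact ENNReal.natCast_ne_top _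
      · exact measure_ne_top μ _
    simpa using ENNReal.Tendsto.const_mul h1 (Or.inr hcne)
  have : (μ.prod μ) Sset ≤ 0 := ge_of_tendsto' htend hbound
  exact absurd (le_antisymm this zero_le') (ne_of_gt hprob)

end
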